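/- For the trivial special Joyce structure (J = 0) over an ASK manifold M with affine special coordinates (xⁱ, y_i) and induced coordinates (xⁱ, y_i, φⁱ, φ_i) on TM, the Kähler form ω₃ equals dxⁱ ∧ dy_i + (1/4π²) dφ_i ∧ dφⁱ, and the holomorphic symplectic form equals Ω = −(1/2π) dZⁱ ∧ (dφ_i + τᵢⱼ dφʲ), where (Zⁱ) are holomorphic special coordinates with dZ_i = τᵢⱼ dZʲ. -/
import Mathlib


/- Section 4.1 (trivialJoyce), pointwise linear-algebra formulation: the
complexified tangent space of TM at a point is W = ℂⁿ × ℂⁿ × ℂⁿ × ℂⁿ, the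
components of a vector being its (dZⁱ, dZ̄ⁱ, dφⁱ, dφ_i)-coordinates. The frame
is ℋ_i = ∂/∂Zⁱ, ℋ_ī = ∂/∂Z̄ⁱ, ν_i = ½(∂/∂φⁱ − τᵢⱼ∂/∂φ_j) and its conjugate
ν_ī; for the trivial special Joyce structure (J = 0), v_i = 2πi·ν_ī. The form
ω₃ is determined by 4π²ω₃(ν_X̄, ν_Y) = ω₃(ℋ_Y, ℋ_X̄) = ω(Y, X̄) with mixed
pairings zero, and Ω by being of type (2,0), Ω(h,h) = Ω(v,v) = 0 and
Ω(h_X, v_Y) = 2i·ω₃(v̄_X, v_Y). Conclusion: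
ω₃ = dxⁱ∧dy_i + (1/4π²)dφ_i∧dφⁱ and Ω = −(1/2π)dZⁱ∧(dφ_i + τᵢⱼdφʲ). -/

/-- W = complexified tangent space, components (dZ, dZ̄, dφ·, dφ·). -/
abbrev Wsp (n : ℕ) := (Fin n → ℂ) × (Fin n → ℂ) × (Fin n → ℂ) × (Fin n → ℂ)

def Hvec {n : ℕ} (a : Fin n) : Wsp n := (Pi.single a 1, 0, 0, 0)

def Hbvec {n : ℕ} (a : Fin n) : Wsp n := (0, Pi.single a 1, 0, 0)

noncomputable def nuvec {n : ℕ} (τ : Fin n → Fin n → ℂ) (a : Fin n) : Wsp n :=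
  (0, 0, Pi.single a (1 / 2 : ℂ), fun j => -(1 / 2 : ℂ) * τ a j)

noncomputable def nubvec {n : ℕ} (τ : Fin n → Fin n → ℂ) (a : Fin n) : Wsp n :=
  (0, 0, Pi.single a (1 / 2 : ℂ), fun j => -(1 / 2 : ℂ) * (starRingEnd ℂ) (τ a j))

/-- v_a = 2πi·ν_ā (trivial special Joyce structure, J = 0). -/
noncomputable def vvec {n : ℕ} (τ : Fin n → Fin n → ℂ) (a : Fin n) : Wsp n :=
  (2 * (Real.pi : ℂ) * Complex.I) • nubvec τ a

/-- The real structure on W (conjugation). -/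
noncomputable def conjW {n : ℕ} (u : Wsp n) : Wsp n :=
  (fun i => (starRingEnd ℂ) (u.2.1 i), fun i => (starRingEnd ℂ) (u.1 i),
   fun i => (starRingEnd ℂ) (u.2.2.1 i), fun i => (starRingEnd ℂ) (u.2.2.2 i))

/-- dxⁱ = ½(dZⁱ + dZ̄ⁱ). -/
noncomputable def dxco {n : ℕ} (u : Wsp n) (i : Fin n) : ℂ :=
  (1 / 2 : ℂ) * (u.1 i + u.2.1 i)

/-- dy_i = −½(Σⱼ τᵢⱼ dZʲ + τ̄ᵢⱼ dZ̄ʲ) (from y_i = −Re Z_i, dZ_i = τᵢⱼdZʲ). -/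
noncomputable def dyco {n : ℕ} (τ : Fin n → Fin n → ℂ) (u : Wsp n) (i : Fin n) : ℂ :=
  -(1 / 2 : ℂ) * (∑ j, (τ i j * u.1 j + (starRingEnd ℂ) (τ i j) * u.2.1 j))

-- linearity lemmas
lemma dxco_add {n : ℕ} (u v : Wsp n) (i : Fin n) : dxco (u + v) i = dxco u i + dxco v i := by
  simp [dxco]; ring

lemma dxco_smul {n : ℕ} (c : ℂ) (u : Wsp n) (i : Fin n) : dxco (c • u) i = c * dxco u i := by
  simp [dxco]; ring

lemma dyco_add {n : ℕ} (τ : Fin n → Fin n → ℂ) (u v : Wsp n) (i : Fin n) :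
    dyco τ (u + v) i = dyco τ u i + dyco τ v i := by
  simp only [dyco, Prod.fst_add, Prod.snd_add, Pi.add_apply]
  rw [Finset.mul_sum, Finset.mul_sum, Finset.mul_sum, ← Finset.sum_add_distrib]
  exact Finset.sum_congr rfl fun j _ => by ring

lemma dyco_smul {n : ℕ} (τ : Fin n → Fin n → ℂ) (c : ℂ) (u : Wsp n) (i : Fin n) :
    dyco τ (c • u) i = c * dyco τ u i := by
  simp only [dyco, Prod.smul_fst, Prod.smul_snd, Pi.smul_apply, smul_eq_mul]
  rw [Finset.mul_sum, Finset.mul_sum, Finset.mul_sum]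
  exact Finset.sum_congr rfl fun j _ => by ring

lemma dxco_mk_add {n : ℕ} (u1 u2 u3 u4 v1 v2 v3 v4 : Fin n → ℂ) (i : Fin n) :
    dxco (u1 + v1, u2 + v2, u3 + v3, u4 + v4) i
      = dxco (u1, u2, u3, u4) i + dxco (v1, v2, v3, v4) i :=
  dxco_add (u1, u2, u3, u4) (v1, v2, v3, v4) i

lemma dyco_mk_add {n : ℕ} (τ : Fin n → Fin n → ℂ) (u1 u2 u3 u4 v1 v2 v3 v4 : Fin n → ℂ)
    (i : Fin n) : dyco τ (u1 + v1, u2 + v2, u3 + v3, u4 + v4) i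
      = dyco τ (u1, u2, u3, u4) i + dyco τ (v1, v2, v3, v4) i :=
  dyco_add τ (u1, u2, u3, u4) (v1, v2, v3, v4) i

lemma dxco_mk_smul {n : ℕ} (c : ℂ) (u1 u2 u3 u4 : Fin n → ℂ) (i : Fin n) :
    dxco (c • u1, c • u2, c • u3, c • u4) i = c * dxco (u1, u2, u3, u4) i :=
  dxco_smul c (u1, u2, u3, u4) i

lemma dyco_mk_smul {n : ℕ} (τ : Fin n → Fin n → ℂ) (c : ℂ) (u1 u2 u3 u4 : Fin n → ℂ)
    (i : Fin n) : dyco τ (c • u1, c • u2, c • u3, c • u4) i = c * dyco τ (u1, u2, u3, u4) i :=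
  dyco_smul τ c (u1, u2, u3, u4) i

noncomputable def F3 {n : ℕ} (τ : Fin n → Fin n → ℂ) (u w : Wsp n) : ℂ :=
  ∑ i, (dxco u i * dyco τ w i - dxco w i * dyco τ u i)
    + (1 / (4 * (Real.pi : ℂ) ^ 2)) *
        ∑ i, (u.2.2.2 i * w.2.2.1 i - w.2.2.2 i * u.2.2.1 i)

lemma F3_add_left {n : ℕ} (τ : Fin n → Fin n → ℂ) (u v w : Wsp n) :
    F3 τ (u + v) w = F3 τ u w + F3 τ v w := by
  obtain ⟨u1, u2, u3, u4⟩ := u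
  obtain ⟨v1, v2, v3, v4⟩ := v
  simp only [F3, Prod.mk_add_mk, dxco_mk_add, dyco_mk_add, Pi.add_apply]
  rw [show (∑ i, ((dxco (u1,u2,u3,u4) i + dxco (v1,v2,v3,v4) i) * dyco τ w i
        - dxco w i * (dyco τ (u1,u2,u3,u4) i + dyco τ (v1,v2,v3,v4) i)))
      = ∑ i, ((dxco (u1,u2,u3,u4) i * dyco τ w i - dxco w i * dyco τ (u1,u2,u3,u4) i)
            + (dxco (v1,v2,v3,v4) i * dyco τ w i - dxco w i * dyco τ (v1,v2,v3,v4) i)) from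
    Finset.sum_congr rfl fun i _ => by ring, Finset.sum_add_distrib]
  rw [show (∑ i, ((u4 i + v4 i) * w.2.2.1 i - w.2.2.2 i * (u3 i + v3 i)))
      = ∑ i, ((u4 i * w.2.2.1 i - w.2.2.2 i * u3 i)
            + (v4 i * w.2.2.1 i - w.2.2.2 i * v3 i)) from
    Finset.sum_congr rfl fun i _ => by ring, Finset.sum_add_distrib]
  first | (left; ring) | ring1 | ring

lemma F3_smul_left {n : ℕ} (τ : Fin n → Fin n → ℂ) (c : ℂ) (u w : Wsp n) :
    F3 τ (c • u) w = c * F3 τ u w := by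
  obtain ⟨u1, u2, u3, u4⟩ := u
  simp only [F3, Prod.smul_mk, dxco_mk_smul, dyco_mk_smul, Pi.smul_apply, smul_eq_mul]
  rw [show (∑ i, (c * dxco (u1,u2,u3,u4) i * dyco τ w i
        - dxco w i * (c * dyco τ (u1,u2,u3,u4) i)))
      = ∑ i, c * (dxco (u1,u2,u3,u4) i * dyco τ w i - dxco w i * dyco τ (u1,u2,u3,u4) i) from
    Finset.sum_congr rfl fun i _ => by ring, ← Finset.mul_sum]
  rw [show (∑ i, (c * u4 i * w.2.2.1 i - w.2.2.2 i * (c * u3 i)))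
      = ∑ i, c * (u4 i * w.2.2.1 i - w.2.2.2 i * u3 i) from
    Finset.sum_congr rfl fun i _ => by ring, ← Finset.mul_sum]
  first | (left; ring) | ring1 | ring

lemma F3_alt {n : ℕ} (τ : Fin n → Fin n → ℂ) (u w : Wsp n) : F3 τ u w = -F3 τ w u := by
  simp only [F3]
  rw [show (∑ i, (dxco u i * dyco τ w i - dxco w i * dyco τ u i))
      = ∑ i, -(dxco w i * dyco τ u i - dxco u i * dyco τ w i) from
    Finset.sum_congr rfl fun i _ => by ring, Finset.sum_neg_distrib]
  rw [show (∑ i, (u.2.2.2 i * w.2.2.1 i - w.2.2.2 i * u.2.2.1 i))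
      = ∑ i, -(w.2.2.2 i * u.2.2.1 i - u.2.2.2 i * w.2.2.1 i) from
    Finset.sum_congr rfl fun i _ => by ring, Finset.sum_neg_distrib]
  first | (left; ring) | ring1 | ring

lemma F3_add_right {n : ℕ} (τ : Fin n → Fin n → ℂ) (u v w : Wsp n) :
    F3 τ u (v + w) = F3 τ u v + F3 τ u w := by
  rw [F3_alt, F3_add_left, F3_alt τ v u, F3_alt τ w u]; ring

lemma F3_smul_right {n : ℕ} (τ : Fin n → Fin n → ℂ) (c : ℂ) (u w : Wsp n) :
    F3 τ u (c • w) = c * F3 τ u w := by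
  rw [F3_alt, F3_smul_left, F3_alt τ w u]; ring

noncomputable def B3 {n : ℕ} (τ : Fin n → Fin n → ℂ) : Wsp n →ₗ[ℂ] Wsp n →ₗ[ℂ] ℂ :=
  LinearMap.mk₂ ℂ (F3 τ) (F3_add_left τ)
    (fun c u w => by rw [F3_smul_left]; rfl)
    (F3_add_right τ)
    (fun u c w => by rw [F3_smul_right]; rfl)

noncomputable def FΩ {n : ℕ} (τ : Fin n → Fin n → ℂ) (u w : Wsp n) : ℂ :=
  -(1 / (2 * (Real.pi : ℂ))) *
    ∑ i, (u.1 i * (w.2.2.2 i + ∑ j, τ i j * w.2.2.1 j)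
        - w.1 i * (u.2.2.2 i + ∑ j, τ i j * u.2.2.1 j))

lemma FΩ_add_left {n : ℕ} (τ : Fin n → Fin n → ℂ) (u v w : Wsp n) :
    FΩ τ (u + v) w = FΩ τ u w + FΩ τ v w := by
  obtain ⟨u1, u2, u3, u4⟩ := u
  obtain ⟨v1, v2, v3, v4⟩ := v
  simp only [FΩ, Prod.mk_add_mk, Pi.add_apply]
  rw [show (∑ i, ((u1 i + v1 i) * (w.2.2.2 i + ∑ j, τ i j * w.2.2.1 j)
        - w.1 i * ((u4 i + v4 i) + ∑ j, τ i j * (u3 j + v3 j))))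
      = ∑ i, ((u1 i * (w.2.2.2 i + ∑ j, τ i j * w.2.2.1 j)
            - w.1 i * (u4 i + ∑ j, τ i j * u3 j))
          + (v1 i * (w.2.2.2 i + ∑ j, τ i j * w.2.2.1 j)
            - w.1 i * (v4 i + ∑ j, τ i j * v3 j))) from
    Finset.sum_congr rfl fun i _ => by
      rw [show (∑ j, τ i j * (u3 j + v3 j))
          = ∑ j, (τ i j * u3 j + τ i j * v3 j) from
        Finset.sum_congr rfl fun j _ => by ring, Finset.sum_add_distrib]
      ring, Finset.sum_add_distrib]
  first | (left; ring) | ring1 | ring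

lemma FΩ_smul_left {n : ℕ} (τ : Fin n → Fin n → ℂ) (c : ℂ) (u w : Wsp n) :
    FΩ τ (c • u) w = c * FΩ τ u w := by
  obtain ⟨u1, u2, u3, u4⟩ := u
  simp only [FΩ, Prod.smul_mk, Pi.smul_apply, smul_eq_mul]
  rw [show (∑ i, (c * u1 i * (w.2.2.2 i + ∑ j, τ i j * w.2.2.1 j)
        - w.1 i * (c * u4 i + ∑ j, τ i j * (c * u3 j))))
      = ∑ i, (c * (u1 i * (w.2.2.2 i + ∑ j, τ i j * w.2.2.1 j)
            - w.1 i * (u4 i + ∑ j, τ i j * u3 j))) from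
    Finset.sum_congr rfl fun i _ => by
      rw [show (∑ j, τ i j * (c * u3 j)) = ∑ j, c * (τ i j * u3 j) from
        Finset.sum_congr rfl fun j _ => by ring, ← Finset.mul_sum]
      ring, ← Finset.mul_sum]
  first | (left; ring) | ring1 | ring

lemma FΩ_alt {n : ℕ} (τ : Fin n → Fin n → ℂ) (u w : Wsp n) : FΩ τ u w = -FΩ τ w u := by
  simp only [FΩ]
  rw [show (∑ i, (u.1 i * (w.2.2.2 i + ∑ j, τ i j * w.2.2.1 j)
        - w.1 i * (u.2.2.2 i + ∑ j, τ i j * u.2.2.1 j)))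
      = ∑ i, -((w.1 i * (u.2.2.2 i + ∑ j, τ i j * u.2.2.1 j)
        - u.1 i * (w.2.2.2 i + ∑ j, τ i j * w.2.2.1 j))) from
    Finset.sum_congr rfl fun i _ => by ring, Finset.sum_neg_distrib]
  first | (left; ring) | ring1 | ring

lemma FΩ_add_right {n : ℕ} (τ : Fin n → Fin n → ℂ) (u v w : Wsp n) :
    FΩ τ u (v + w) = FΩ τ u v + FΩ τ u w := by
  rw [FΩ_alt, FΩ_add_left, FΩ_alt τ v u, FΩ_alt τ w u]; ring

lemma FΩ_smul_right {n : ℕ} (τ : Fin n → Fin n → ℂ) (c : ℂ) (u w : Wsp n) :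
    FΩ τ u (c • w) = c * FΩ τ u w := by
  rw [FΩ_alt, FΩ_smul_left, FΩ_alt τ w u]; ring

noncomputable def BΩ {n : ℕ} (τ : Fin n → Fin n → ℂ) : Wsp n →ₗ[ℂ] Wsp n →ₗ[ℂ] ℂ :=
  LinearMap.mk₂ ℂ (FΩ τ) (FΩ_add_left τ)
    (fun c u w => by rw [FΩ_smul_left]; rfl)
    (FΩ_add_right τ)
    (fun u c w => by rw [FΩ_smul_right]; rfl)

section evals
variable {n : ℕ} (τ : Fin n → Fin n → ℂ) (a b : Fin n)

local notation "cj" => starRingEnd ℂ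

lemma F3_HH : F3 τ (Hvec a) (Hvec b) = (1/4 : ℂ) * (τ b a - τ a b) := by
  simp [F3, dxco, dyco, Hvec, Pi.single_apply, mul_ite, ite_mul,
    Finset.sum_ite_eq, Finset.sum_ite_eq', Finset.mul_sum, Finset.sum_add_distrib,
    Finset.sum_neg_distrib]
  first | (left; ring) | ring1 | ring

lemma F3_HHb : F3 τ (Hvec a) (Hbvec b) = (1/4 : ℂ) * (τ b a - cj (τ a b)) := by
  simp [F3, dxco, dyco, Hvec, Hbvec, Pi.single_apply, mul_ite, ite_mul,
    Finset.sum_ite_eq, Finset.sum_ite_eq', Finset.mul_sum, Finset.sum_add_distrib,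
    Finset.sum_neg_distrib]
  first | (left; ring) | ring1 | ring

lemma F3_HbHb : F3 τ (Hbvec a) (Hbvec b) = (1/4 : ℂ) * (cj (τ b a) - cj (τ a b)) := by
  simp [F3, dxco, dyco, Hbvec, Pi.single_apply, mul_ite, ite_mul,
    Finset.sum_ite_eq, Finset.sum_ite_eq', Finset.mul_sum, Finset.sum_add_distrib,
    Finset.sum_neg_distrib]
  first | (left; ring) | ring1 | ring

lemma F3_Hnu : F3 τ (Hvec a) (nuvec τ b) = 0 := by
  simp [F3, dxco, dyco, Hvec, nuvec]

lemma F3_Hnub : F3 τ (Hvec a) (nubvec τ b) = 0 := by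
  simp [F3, dxco, dyco, Hvec, nubvec]

lemma F3_Hbnu : F3 τ (Hbvec a) (nuvec τ b) = 0 := by
  simp [F3, dxco, dyco, Hbvec, nuvec]

lemma F3_Hbnub : F3 τ (Hbvec a) (nubvec τ b) = 0 := by
  simp [F3, dxco, dyco, Hbvec, nubvec]

lemma F3_nunu : F3 τ (nuvec τ a) (nuvec τ b)
    = (1 / (4 * (Real.pi : ℂ) ^ 2)) * ((1/4 : ℂ) * (τ b a - τ a b)) := by
  simp [F3, dxco, dyco, nuvec, Pi.single_apply, mul_ite, ite_mul,
    Finset.sum_ite_eq, Finset.sum_ite_eq', Finset.sum_add_distrib, Finset.sum_neg_distrib]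
  first | (left; ring) | ring1 | ring

lemma F3_nunub : F3 τ (nuvec τ a) (nubvec τ b)
    = (1 / (4 * (Real.pi : ℂ) ^ 2)) * ((1/4 : ℂ) * (cj (τ b a) - τ a b)) := by
  simp [F3, dxco, dyco, nuvec, nubvec, Pi.single_apply, mul_ite, ite_mul,
    Finset.sum_ite_eq, Finset.sum_ite_eq', Finset.sum_add_distrib, Finset.sum_neg_distrib]
  first | (left; ring) | ring1 | ring

lemma F3_nubnu : F3 τ (nubvec τ a) (nuvec τ b)
    = (1 / (4 * (Real.pi : ℂ) ^ 2)) * ((1/4 : ℂ) * (τ b a - cj (τ a b))) := by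
  simp [F3, dxco, dyco, nuvec, nubvec, Pi.single_apply, mul_ite, ite_mul,
    Finset.sum_ite_eq, Finset.sum_ite_eq', Finset.sum_add_distrib, Finset.sum_neg_distrib]
  first | (left; ring) | ring1 | ring

lemma F3_nubnub : F3 τ (nubvec τ a) (nubvec τ b)
    = (1 / (4 * (Real.pi : ℂ) ^ 2)) * ((1/4 : ℂ) * (cj (τ b a) - cj (τ a b))) := by
  simp [F3, dxco, dyco, nubvec, Pi.single_apply, mul_ite, ite_mul,
    Finset.sum_ite_eq, Finset.sum_ite_eq', Finset.sum_add_distrib, Finset.sum_neg_distrib]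
  first | (left; ring) | ring1 | ring

lemma FΩ_HH : FΩ τ (Hvec a) (Hvec b) = 0 := by
  simp [FΩ, Hvec]

lemma FΩ_HHb : FΩ τ (Hvec a) (Hbvec b) = 0 := by
  simp [FΩ, Hvec, Hbvec]

lemma FΩ_HbHb : FΩ τ (Hbvec a) (Hbvec b) = 0 := by
  simp [FΩ, Hbvec]

lemma FΩ_HbH : FΩ τ (Hbvec a) (Hvec b) = 0 := by
  simp [FΩ, Hvec, Hbvec]

lemma FΩ_Hnu : FΩ τ (Hvec a) (nuvec τ b)
    = -(1 / (2 * (Real.pi : ℂ))) * ((1/2 : ℂ) * (τ a b - τ b a)) := by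
  simp [FΩ, Hvec, nuvec, Pi.single_apply, mul_ite, ite_mul,
    Finset.sum_ite_eq, Finset.sum_ite_eq', Finset.sum_add_distrib, Finset.sum_neg_distrib]
  first | (left; ring) | ring1 | ring

lemma FΩ_Hnub : FΩ τ (Hvec a) (nubvec τ b)
    = -(1 / (2 * (Real.pi : ℂ))) * ((1/2 : ℂ) * (τ a b - cj (τ b a))) := by
  simp [FΩ, Hvec, nubvec, Pi.single_apply, mul_ite, ite_mul,
    Finset.sum_ite_eq, Finset.sum_ite_eq', Finset.sum_add_distrib, Finset.sum_neg_distrib]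
  first | (left; ring) | ring1 | ring

lemma FΩ_Hbnu : FΩ τ (Hbvec a) (nuvec τ b) = 0 := by simp [FΩ, Hbvec, nuvec]
lemma FΩ_Hbnub : FΩ τ (Hbvec a) (nubvec τ b) = 0 := by simp [FΩ, Hbvec, nubvec]
lemma FΩ_nuHb : FΩ τ (nuvec τ a) (Hbvec b) = 0 := by simp [FΩ, Hbvec, nuvec]
lemma FΩ_nubHb : FΩ τ (nubvec τ a) (Hbvec b) = 0 := by simp [FΩ, Hbvec, nubvec]
lemma FΩ_nunu : FΩ τ (nuvec τ a) (nuvec τ b) = 0 := by simp [FΩ, nuvec]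
lemma FΩ_nunub : FΩ τ (nuvec τ a) (nubvec τ b) = 0 := by simp [FΩ, nuvec, nubvec]
lemma FΩ_nubnu : FΩ τ (nubvec τ a) (nuvec τ b) = 0 := by simp [FΩ, nuvec, nubvec]
lemma FΩ_nubnub : FΩ τ (nubvec τ a) (nubvec τ b) = 0 := by simp [FΩ, nubvec]

lemma conjW_vvec : conjW (vvec τ a) = (-(2 * (Real.pi : ℂ) * Complex.I)) • nuvec τ a := by
  refine Prod.ext ?_ (Prod.ext ?_ (Prod.ext ?_ ?_)) <;>
    funext j <;>
    simp only [conjW, vvec, nuvec, nubvec, Prod.smul_mk, Pi.smul_apply, smul_eq_mul,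
      Pi.single_apply, mul_ite, mul_zero, map_mul, apply_ite (starRingEnd ℂ), map_zero,
      map_one, map_neg, map_div₀, map_ofNat, Complex.conj_I, Complex.conj_ofReal,
      Prod.mk.injEq, Pi.zero_apply, Complex.conj_conj, one_div, map_inv₀] <;>
    (try split) <;> ring

end evals

theorem stmt_13 {n : ℕ} (τ : Fin n → Fin n → ℂ)
    (hτ : ∀ i j, τ i j = τ j i)
    (hspan : Submodule.span ℂ
      (Set.range (Hvec (n := n)) ∪ Set.range (Hbvec (n := n)) ∪
        Set.range (nuvec τ) ∪ Set.range (nubvec τ)) = ⊤)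
    (ω3 : Wsp n →ₗ[ℂ] Wsp n →ₗ[ℂ] ℂ)
    (halt : ∀ u w, ω3 u w = -(ω3 w u))
    -- 4π²ω₃(ν_X̄, ν_Y) = ω(Y, X̄), ω₃(ℋ_Y, ℋ_X̄) = ω(Y, X̄),
    -- with ω(∂Z_b, ∂Z̄_a) = (i/2)Im τ_{ba}
    (hω3νν : ∀ a b, (4 : ℂ) * (Real.pi : ℂ) ^ 2 * ω3 (nubvec τ a) (nuvec τ b)
      = Complex.I / 2 * ((τ b a).im : ℂ))
    (hω3HH : ∀ a b, ω3 (Hvec b) (Hbvec a) = Complex.I / 2 * ((τ b a).im : ℂ))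
    (hmix1 : ∀ a b, ω3 (Hvec a) (nuvec τ b) = 0)
    (hmix2 : ∀ a b, ω3 (Hvec a) (nubvec τ b) = 0)
    (hmix3 : ∀ a b, ω3 (Hbvec a) (nuvec τ b) = 0)
    (hmix4 : ∀ a b, ω3 (Hbvec a) (nubvec τ b) = 0)
    (hHH0 : ∀ a b, ω3 (Hvec a) (Hvec b) = 0)
    (hHbHb0 : ∀ a b, ω3 (Hbvec a) (Hbvec b) = 0)
    (hνν0 : ∀ a b, ω3 (nuvec τ a) (nuvec τ b) = 0)
    (hνbνb0 : ∀ a b, ω3 (nubvec τ a) (nubvec τ b) = 0)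
    (Ω : Wsp n →ₗ[ℂ] Wsp n →ₗ[ℂ] ℂ)
    (hΩalt : ∀ u w, Ω u w = -(Ω w u))
    -- Ω is of type (2,0) with respect to I₃
    (hΩ20h : ∀ a w, Ω (Hbvec a) w = 0)
    (hΩ20v : ∀ a w, Ω (nuvec τ a) w = 0)
    (hΩhh : ∀ a b, Ω (Hvec a) (Hvec b) = 0)
    (hΩvv : ∀ a b, Ω (vvec τ a) (vvec τ b) = 0)
    (hΩhv : ∀ a b, Ω (Hvec a) (vvec τ b)
      = 2 * Complex.I * ω3 (conjW (vvec τ a)) (vvec τ b)) :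
    (∀ u w : Wsp n, ω3 u w =
      ∑ i, (dxco u i * dyco τ w i - dxco w i * dyco τ u i)
      + (1 / (4 * (Real.pi : ℂ) ^ 2)) *
          ∑ i, (u.2.2.2 i * w.2.2.1 i - w.2.2.2 i * u.2.2.1 i)) ∧
    (∀ u w : Wsp n, Ω u w =
      -(1 / (2 * (Real.pi : ℂ))) *
        ∑ i, (u.1 i * (w.2.2.2 i + ∑ j, τ i j * w.2.2.1 j)
            - w.1 i * (u.2.2.2 i + ∑ j, τ i j * u.2.2.1 j))) := by
  have hπ : ((Real.pi : ℂ)) ≠ 0 := Complex.ofReal_ne_zero.mpr Real.pi_ne_zero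
  have h2πI : (2 * (Real.pi : ℂ) * Complex.I) ≠ 0 :=
    mul_ne_zero (mul_ne_zero two_ne_zero hπ) Complex.I_ne_zero
  have h4π2 : ((4 : ℂ) * (Real.pi : ℂ) ^ 2) ≠ 0 :=
    mul_ne_zero (by norm_num) (pow_ne_zero 2 hπ)
  have him : ∀ z : ℂ, Complex.I / 2 * ((z.im : ℝ) : ℂ) = (1/4 : ℂ) * (z - (starRingEnd ℂ) z) := by
    intro z
    rw [Complex.im_eq_sub_conj]
    field_simp
    ring
  have hA : ∀ a b, ω3 (nubvec τ a) (nuvec τ b)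
      = (Complex.I / 2 * ((τ b a).im : ℂ)) / (4 * (Real.pi : ℂ) ^ 2) := by
    intro a b
    rw [eq_div_iff h4π2]
    linear_combination hω3νν a b
  have key3 : ω3 = B3 τ := by
    apply LinearMap.ext_on hspan
    intro u hu
    apply LinearMap.ext_on hspan
    intro w hw
    rcases hu with (((⟨a, rfl⟩ | ⟨a, rfl⟩) | ⟨a, rfl⟩) | ⟨a, rfl⟩) <;>
      rcases hw with (((⟨b, rfl⟩ | ⟨b, rfl⟩) | ⟨b, rfl⟩) | ⟨b, rfl⟩) <;>
      simp only [B3, LinearMap.mk₂_apply]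
    · rw [hHH0, F3_HH, hτ b a]; try ring
    · rw [hω3HH b a, F3_HHb, him, hτ b a]; try ring
    · rw [hmix1, F3_Hnu]
    · rw [hmix2, F3_Hnub]
    · rw [halt, hω3HH a b, F3_alt, F3_HHb, him, hτ b a]; try ring
    · rw [hHbHb0, F3_HbHb, hτ b a]; try ring
    · rw [hmix3, F3_Hbnu]
    · rw [hmix4, F3_Hbnub]
    · rw [halt, hmix1 b a, F3_alt, F3_Hnu]; try ring
    · rw [halt, hmix3 b a, F3_alt, F3_Hbnu]; try ring
    · rw [hνν0, F3_nunu, hτ b a]; try ring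
    · rw [halt, hA b a, F3_nunub, him, hτ b a]; try ring
    · rw [halt, hmix2 b a, F3_alt, F3_Hnub]; try ring
    · rw [halt, hmix4 b a, F3_alt, F3_Hbnub]; try ring
    · rw [hA a b, F3_nubnu, him, hτ b a]; try ring
    · rw [hνbνb0, F3_nubnub, hτ b a]; try ring
  have hHnub : ∀ a b, Ω (Hvec a) (nubvec τ b) = FΩ τ (Hvec a) (nubvec τ b) := by
    intro a b
    have h0 := hΩhv a b
    rw [conjW_vvec] at h0
    simp only [vvec, map_smul, LinearMap.smul_apply, smul_eq_mul] at h0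
    rw [halt (nuvec τ a) (nubvec τ b), hA b a] at h0
    apply mul_left_cancel₀ h2πI
    have hI4 : Complex.I ^ 4 = 1 := by simp [pow_succ]
    rw [h0, FΩ_Hnub, hτ b a, Complex.im_eq_sub_conj]
    field_simp
    ring_nf
    simp only [hI4, Complex.I_sq]
    ring
  have keyΩ : Ω = BΩ τ := by
    apply LinearMap.ext_on hspan
    intro u hu
    apply LinearMap.ext_on hspan
    intro w hw
    rcases hu with (((⟨a, rfl⟩ | ⟨a, rfl⟩) | ⟨a, rfl⟩) | ⟨a, rfl⟩) <;>
      rcases hw with (((⟨b, rfl⟩ | ⟨b, rfl⟩) | ⟨b, rfl⟩) | ⟨b, rfl⟩) <;>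
      simp only [BΩ, LinearMap.mk₂_apply]
    · rw [hΩhh, FΩ_HH]
    · rw [hΩalt, hΩ20h b, FΩ_HHb]; try ring
    · rw [hΩalt, hΩ20v b, FΩ_Hnu, hτ b a]; try ring
    · exact hHnub a b
    · rw [hΩ20h a, FΩ_HbH]
    · rw [hΩ20h a, FΩ_HbHb]
    · rw [hΩ20h a, FΩ_Hbnu]
    · rw [hΩ20h a, FΩ_Hbnub]
    · rw [hΩ20v a, FΩ_alt, FΩ_Hnu, hτ b a]; try ring
    · rw [hΩ20v a, FΩ_nuHb]
    · rw [hΩ20v a, FΩ_nunu]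
    · rw [hΩ20v a, FΩ_nunub]
    · rw [hΩalt, hHnub b a, FΩ_alt]; try ring
    · rw [hΩalt, hΩ20h b, FΩ_nubHb]; try ring
    · rw [hΩalt, hΩ20v b, FΩ_nubnu]; try ring
    · have h0 := hΩvv a b
      simp only [vvec, map_smul, LinearMap.smul_apply, smul_eq_mul] at h0
      rcases mul_eq_zero.mp h0 with h | h
      · exact absurd h h2πI
      rcases mul_eq_zero.mp h with h | h
      · exact absurd h h2πI
      rw [h, FΩ_nubnub]
  constructor
  · intro u w
    rw [key3]
    rfl
  · intro u w
    rw [keyΩ]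
    rfl
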